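/- A ring R is a ΔU-ring if and only if R is a weakly ΔU-ring and 2 ∈ Δ(R). -/
import Mathlib


/-- `Δ(R) = {r ∈ R : r + u is a unit for every unit u}`. -/
def Delta (R : Type*) [Ring R] : Set R :=
  {r : R | ∀ u : R, IsUnit u → IsUnit (r + u)}

/-- `R` is a weakly ΔU-ring: every unit is `1 + d` or `-1 + d` with `d ∈ Δ(R)`. -/
def IsWDU (R : Type*) [Ring R] : Prop :=
  ∀ u : R, IsUnit u → ∃ d ∈ Delta R, u = 1 + d ∨ u = -1 + d

/-- `R` is a ΔU-ring: every unit is `1 + d` with `d ∈ Δ(R)`. -/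
def IsDU (R : Type*) [Ring R] : Prop :=
  ∀ u : R, IsUnit u → ∃ d ∈ Delta R, u = 1 + d

lemma Delta.neg {R : Type*} [Ring R] {d : R} (hd : d ∈ Delta R) : -d ∈ Delta R := by
  intro u hu
  have : IsUnit (d + -u) := hd _ hu.neg
  have h := this.neg
  rwa [neg_add, neg_neg] at h

lemma Delta.add {R : Type*} [Ring R] {a b : R} (ha : a ∈ Delta R) (hb : b ∈ Delta R) :
    a + b ∈ Delta R := by
  intro u hu
  have : IsUnit (a + (b + u)) := ha _ (hb _ hu)
  rwa [← add_assoc] at this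

/-- `R` is ΔU iff `R` is weakly ΔU and `2 ∈ Δ(R)`. -/
theorem stmt_11 (R : Type*) [Ring R] :
    IsDU R ↔ (IsWDU R ∧ (2 : R) ∈ Delta R) := by
  constructor
  · intro h
    refine ⟨fun u hu => (h u hu).imp fun d ⟨hd, he⟩ => ⟨hd, Or.inl he⟩, ?_⟩
    obtain ⟨d, hd, he⟩ := h (-1) isUnit_one.neg
    have hd2 : d = -2 := by apply add_left_cancel (a := (1:R)); rw [← he]; norm_num
    have : -d ∈ Delta R := Delta.neg hd
    rwa [hd2, neg_neg] at this
  · rintro ⟨hw, h2⟩ u hu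
    obtain ⟨d, hd, he | he⟩ := hw u hu
    · exact ⟨d, hd, he⟩
    · refine ⟨d + -2, Delta.add hd (Delta.neg h2), ?_⟩
      rw [he, show (2:R) = 1 + 1 from one_add_one_eq_two.symm]; abel
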